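/- Let β ∈ [1/2, 1] and let B : [0,1] → [0,∞) satisfy B(0) = B(1) = 0, B(1/2) ≤ 1/2, and suppose that for all 0 ≤ x ≤ y ≤ 1 the two-point inequality max{ ((y−x)^{1/β} + B(y)^{1/β})^β , (y−x) + (2^β − 1)·B(y) } + B(x) ≥ 2·B((x+y)/2) holds. Then for every integer n ≥ 1 and every subset A ⊆ {0,1}^n one has 𝔼 h_A^β ≥ B(μ(A)). -/

import Mathlib

open Finset

/-- `hA n A x` is `0` if `x ∉ A`, and otherwise the number of neighbours of `x`
(vertices differing from `x` in exactly one coordinate) lying in the complement of `A`. -/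
def hA (n : ℕ) (A : Finset (Fin n → Bool)) (x : Fin n → Bool) : ℕ :=
  if x ∈ A then
    (Finset.univ.filter (fun y : Fin n → Bool =>
      y ∉ A ∧ (Finset.univ.filter (fun i : Fin n => x i ≠ y i)).card = 1)).card
  else 0

/-- The uniform probability measure of `A ⊆ {0,1}^n`. -/
noncomputable def muA (n : ℕ) (A : Finset (Fin n → Bool)) : ℝ :=
  (A.card : ℝ) / 2 ^ n

/-- `𝔼 h_A^β = 2^{-n} Σ_x h_A(x)^β` (real power, with `0^β = 0` for `β ≠ 0`). -/
noncomputable def EhPow (n : ℕ) (A : Finset (Fin n → Bool)) (β : ℝ) : ℝ :=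
  ((2 : ℝ) ^ n)⁻¹ * ∑ x : Fin n → Bool, (hA n A x : ℝ) ^ β

/-- The two-sided boundary counting function `w_A`. -/
def wA (n : ℕ) (A : Finset (Fin n → Bool)) (x : Fin n → Bool) : ℕ :=
  if x ∈ A then hA n A x else hA n Aᶜ x

/-- `𝔼 w_A^β = 2^{-n} Σ_x w_A(x)^β`. -/
noncomputable def EwPow (n : ℕ) (A : Finset (Fin n → Bool)) (β : ℝ) : ℝ :=
  ((2 : ℝ) ^ n)⁻¹ * ∑ x : Fin n → Bool, (wA n A x : ℝ) ^ β

/-- A subcube of `{0,1}^n`: the set of points agreeing with `v` on the coordinates in `S`. -/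
def IsSubcube (n : ℕ) (A : Finset (Fin n → Bool)) : Prop :=
  ∃ (S : Finset (Fin n)) (v : Fin n → Bool),
    A = Finset.univ.filter (fun x : Fin n → Bool => ∀ i ∈ S, x i = v i)

/-! ### Auxiliary definitions and lemmas -/

/-- The slice of `A` by the first coordinate. -/
def slc (n : ℕ) (A : Finset (Fin (n+1) → Bool)) (b : Bool) : Finset (Fin n → Bool) :=
  univ.filter fun z => (Fin.cons b z : Fin (n+1) → Bool) ∈ A

lemma mem_slc {n : ℕ} {A : Finset (Fin (n+1) → Bool)} {b : Bool} {z : Fin n → Bool} :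
    z ∈ slc n A b ↔ (Fin.cons b z : Fin (n+1) → Bool) ∈ A := by
  simp [slc]

lemma sumCons {M : Type*} [AddCommMonoid M] (n : ℕ) (F : (Fin (n+1) → Bool) → M) :
    ∑ x, F x = ∑ z : Fin n → Bool, F (Fin.cons false z)
      + ∑ z : Fin n → Bool, F (Fin.cons true z) := by
  rw [← (Fin.consEquiv (fun _ => Bool)).sum_comp F]
  rw [Fintype.sum_prod_type, Fintype.sum_bool]
  simp [Fin.consEquiv, add_comm]

lemma diffcard (n : ℕ) (z w : Fin n → Bool) (b c : Bool) :
    (univ.filter fun i : Fin (n+1) =>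
        (Fin.cons b z : Fin (n+1) → Bool) i ≠ (Fin.cons c w : Fin (n+1) → Bool) i).card
    = (if b = c then 0 else 1) + (univ.filter fun i : Fin n => z i ≠ w i).card := by
  rw [Finset.card_filter, Finset.card_filter, Fin.sum_univ_succ]
  simp [Fin.cons_zero, Fin.cons_succ]

lemma diffzero (n : ℕ) (z w : Fin n → Bool) :
    (univ.filter fun i : Fin n => z i ≠ w i).card = 0 ↔ z = w := by
  rw [Finset.card_eq_zero, Finset.filter_eq_empty_iff]
  constructor
  · intro h; funext i; have := h (mem_univ i); simpa using this
  · intro h i _; simp [h]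

lemma hA_cons (n : ℕ) (A : Finset (Fin (n+1) → Bool)) (b : Bool) (z : Fin n → Bool) :
    hA (n+1) A (Fin.cons b z) = hA n (slc n A b) z
      + (if (Fin.cons b z : Fin (n+1) → Bool) ∈ A ∧
          (Fin.cons (!b) z : Fin (n+1) → Bool) ∉ A then 1 else 0) := by
  by_cases hz : (Fin.cons b z : Fin (n+1) → Bool) ∈ A
  · rw [hA, if_pos hz, hA, if_pos (mem_slc.2 hz)]
    rw [Finset.card_filter, sumCons]
    have key : ∀ c : Bool, ∑ w : Fin n → Bool,
        (if ((Fin.cons c w : Fin (n+1) → Bool) ∉ A ∧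
          (univ.filter fun i : Fin (n+1) => (Fin.cons b z : Fin (n+1) → Bool) i
            ≠ (Fin.cons c w : Fin (n+1) → Bool) i).card = 1) then 1 else 0)
        = if b = c then
            (univ.filter (fun w : Fin n → Bool =>
              w ∉ slc n A b ∧ (univ.filter (fun i : Fin n => z i ≠ w i)).card = 1)).card
          else (if (Fin.cons c z : Fin (n+1) → Bool) ∈ A then 0 else 1) := by
      intro c
      by_cases hbc : b = c
      · subst hbc
        rw [if_pos rfl, Finset.card_filter]
        refine Finset.sum_congr rfl fun w _ => ?_
        rw [diffcard]
        simp [mem_slc]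
      · rw [if_neg hbc]
        have : ∀ w : Fin n → Bool,
            (if ((Fin.cons c w : Fin (n+1) → Bool) ∉ A ∧
              (univ.filter fun i : Fin (n+1) => (Fin.cons b z : Fin (n+1) → Bool) i
                ≠ (Fin.cons c w : Fin (n+1) → Bool) i).card = 1) then 1 else 0)
            = if w = z then (if (Fin.cons c z : Fin (n+1) → Bool) ∈ A then 0 else 1) else 0 := by
          intro w
          rw [diffcard, if_neg hbc]
          by_cases hwz : w = z
          · subst hwz
            simp [diffzero]
          · have : ¬ (univ.filter fun i : Fin n => z i ≠ w i).card = 0 := by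
              rw [diffzero]; exact fun h => hwz h.symm
            rw [if_neg hwz, if_neg]
            rintro ⟨-, h⟩
            exact this (by omega)
        rw [Finset.sum_congr rfl fun w _ => this w, Finset.sum_ite_eq' univ z]
        simp
    rw [key false, key true]
    cases b <;> simp [hz, add_comm]
  · have hz' : z ∉ slc n A b := fun h => hz (mem_slc.1 h)
    rw [hA, if_neg hz, hA, if_neg hz', if_neg (fun h => hz h.1)]

lemma cardSplit (n : ℕ) (A : Finset (Fin (n+1) → Bool)) :
    A.card = (slc n A false).card + (slc n A true).card := by
  have h1 : A.card = ∑ x : Fin (n+1) → Bool, (if x ∈ A then 1 else 0) := by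
    rw [← Finset.card_filter, Finset.filter_univ_mem]
  rw [h1, sumCons, slc, slc, Finset.card_filter, Finset.card_filter]

lemma L1 {β : ℝ} (hβ0 : 0 < β) (hβ1 : β ≤ 1) {a b : ℝ} (ha : 0 ≤ a) (hab : a ≤ b) :
    a ^ β + ((2:ℝ) ^ β - 1) * b ^ β ≤ (a + b) ^ β := by
  have hb : 0 ≤ b := ha.trans hab
  rcases eq_or_lt_of_le hb with hb0 | hb0
  · have ha0 : a = 0 := le_antisymm (hab.trans hb0.ge) ha
    rw [ha0, ← hb0]
    simp [Real.zero_rpow hβ0.ne']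
  · have hden : (0:ℝ) < 2 * b - a := by linarith
    set l := b / (2 * b - a) with hl
    set m := (b - a) / (2 * b - a) with hm
    have hl0 : 0 ≤ l := by positivity
    have hm0 : 0 ≤ m := by apply div_nonneg <;> linarith
    have hlm : l + m = 1 := by
      rw [hl, hm, ← add_div, show b + (b - a) = 2 * b - a by ring]
      exact div_self hden.ne'
    have hcon := Real.concaveOn_rpow hβ0.le hβ1
    have h2b : (0:ℝ) ≤ 2 * b := by linarith
    have e1 : l * a + m * (2 * b) = b := by
      rw [hl, hm, div_mul_eq_mul_div, div_mul_eq_mul_div, ← add_div, div_eq_iff hden.ne']; ring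
    have e2 : m * a + l * (2 * b) = a + b := by
      rw [hm, hl, div_mul_eq_mul_div, div_mul_eq_mul_div, ← add_div, div_eq_iff hden.ne']; ring
    have i1 := hcon.2 (Set.mem_Ici.2 ha) (Set.mem_Ici.2 h2b) hl0 hm0 hlm
    have i2 := hcon.2 (Set.mem_Ici.2 ha) (Set.mem_Ici.2 h2b) hm0 hl0 (by linarith)
    simp only [smul_eq_mul] at i1 i2
    rw [e1] at i1
    rw [e2] at i2
    have h2brpow : (2 * b) ^ β = 2 ^ β * b ^ β := Real.mul_rpow (by norm_num) hb
    rw [h2brpow] at i1 i2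
    have h3 : l * a ^ β + m * a ^ β = a ^ β := by rw [← add_mul, hlm, one_mul]
    have h4 : l * (2 ^ β * b ^ β) + m * (2 ^ β * b ^ β) = 2 ^ β * b ^ β := by
      rw [← add_mul, hlm, one_mul]
    linarith

lemma two_rpow_le {β : ℝ} (hβ1 : β ≤ 1) : (2:ℝ) ^ β ≤ 2 := by
  calc (2:ℝ) ^ β ≤ 2 ^ (1:ℝ) := Real.rpow_le_rpow_of_exponent_le (by norm_num) hβ1
  _ = 2 := Real.rpow_one 2

lemma one_le_two_rpow {β : ℝ} (hβ0 : 0 ≤ β) : (1:ℝ) ≤ 2 ^ β := by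
  calc (1:ℝ) = 2 ^ (0:ℝ) := (Real.rpow_zero 2).symm
  _ ≤ 2 ^ β := Real.rpow_le_rpow_of_exponent_le (by norm_num) hβ0

lemma L1' {β : ℝ} (hβ0 : 0 < β) (hβ1 : β ≤ 1) (m δ : ℕ) (hδ : δ ≤ 1) :
    (δ:ℝ) + ((2:ℝ) ^ β - 1) * (m:ℝ) ^ β ≤ ((m + δ : ℕ) : ℝ) ^ β := by
  have hmn : (0:ℝ) ≤ (m:ℝ) := Nat.cast_nonneg m
  have hm : (0:ℝ) ≤ (m:ℝ) ^ β := Real.rpow_nonneg hmn β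
  interval_cases δ
  · have h2 := two_rpow_le hβ1
    push_cast
    rw [add_zero, zero_add]
    nlinarith
  · rcases Nat.eq_zero_or_pos m with rfl | hm1
    · simp [Real.zero_rpow hβ0.ne', Real.one_rpow]
    · have h1m : (1:ℝ) ≤ (m:ℝ) := by exact_mod_cast hm1
      have := L1 hβ0 hβ1 (le_of_lt one_pos) h1m
      rw [Real.one_rpow] at this
      push_cast
      calc (1:ℝ) + (2 ^ β - 1) * (m:ℝ) ^ β ≤ (1 + (m:ℝ)) ^ β := this
      _ = ((m:ℝ) + 1) ^ β := by rw [add_comm]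

open NNReal in
lemma phi_subadd {q : ℝ} (hq : 1 ≤ q) (p r : ℝ≥0 × ℝ≥0) :
    ((p.1 + r.1) ^ q + (p.2 + r.2) ^ q) ^ (1/q) ≤
      (p.1 ^ q + p.2 ^ q) ^ (1/q) + (r.1 ^ q + r.2 ^ q) ^ (1/q) := by
  have := NNReal.Lp_add_le (s := (univ : Finset Bool))
    (f := fun t => bif t then p.1 else p.2) (g := fun t => bif t then r.1 else r.2) hq
  simpa [Fintype.sum_bool] using this

open NNReal in
lemma revMink {ι : Type*} [Fintype ι] {β : ℝ} (hβ0 : 0 < β) (hβ1 : β ≤ 1)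
    (F G : ι → ℝ≥0) :
    ((∑ i, F i ^ β) ^ (1/β) + (∑ i, G i ^ β) ^ (1/β)) ^ β ≤ ∑ i, (F i + G i) ^ β := by
  set q : ℝ := 1/β with hqdef
  have hq : 1 ≤ q := by rw [hqdef, le_div_iff₀ hβ0]; linarith
  have hβq : (1:ℝ)/q = β := by rw [hqdef]; field_simp
  have hq0 : q ≠ 0 := by rw [hqdef]; positivity
  have h0 : (((0:ℝ≥0×ℝ≥0).1 ^ q + (0:ℝ≥0×ℝ≥0).2 ^ q) ^ (1/q) : ℝ≥0) = 0 := by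
    rw [Prod.fst_zero, Prod.snd_zero, NNReal.zero_rpow hq0, add_zero,
      NNReal.zero_rpow (one_div_ne_zero hq0)]
  have key := Finset.le_sum_of_subadditive
    (f := fun p : ℝ≥0 × ℝ≥0 => (p.1 ^ q + p.2 ^ q) ^ (1/q)) h0.le (phi_subadd hq)
    univ (fun i => (F i ^ β, G i ^ β))
  have hsum : (∑ i, ((F i ^ β, G i ^ β) : ℝ≥0 × ℝ≥0)) = (∑ i, F i ^ β, ∑ i, G i ^ β) := by
    ext <;> simp [Prod.fst_sum, Prod.snd_sum]
  rw [hsum] at key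
  simp only at key
  have hpow : ∀ x : ℝ≥0, (x ^ β) ^ q = x := by
    intro x
    rw [← NNReal.rpow_mul, hqdef]
    field_simp
    simp
  calc ((∑ i, F i ^ β) ^ (1/β) + (∑ i, G i ^ β) ^ (1/β)) ^ β
      = ((∑ i, F i ^ β) ^ q + (∑ i, G i ^ β) ^ q) ^ (1/q) := by rw [hβq, hqdef]
    _ ≤ ∑ i, ((F i ^ β) ^ q + (G i ^ β) ^ q) ^ (1/q) := key
    _ = ∑ i, (F i + G i) ^ β := by
        refine Finset.sum_congr rfl fun i _ => ?_
        rw [hpow, hpow, hβq]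

open NNReal in
lemma L2 {ι : Type*} [Fintype ι] {β : ℝ} (hβ0 : 0 < β) (hβ1 : β ≤ 1) (f g : ι → ℕ) :
    ((∑ i, (f i : ℝ) ^ β) ^ (1/β) + (∑ i, (g i : ℝ) ^ β) ^ (1/β)) ^ β
      ≤ ∑ i, ((f i + g i : ℕ) : ℝ) ^ β := by
  have h := revMink hβ0 hβ1 (fun i => (f i : ℝ≥0)) (fun i => (g i : ℝ≥0))
  have h' := NNReal.coe_le_coe.2 h
  push_cast at h'
  convert h' using 3 ; push_cast ; ring

lemma hA_zero (A : Finset (Fin 0 → Bool)) (x : Fin 0 → Bool) : hA 0 A x = 0 := by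
  rw [hA]
  split
  · convert Finset.card_empty
    rw [Finset.filter_eq_empty_iff]
    intro y _
    rintro ⟨-, h⟩
    have : (univ.filter (fun i : Fin 0 => x i ≠ y i)) = ∅ := Finset.eq_empty_of_isEmpty _
    rw [this] at h
    simp at h
  · rfl

lemma base_case {β : ℝ} (hβ0 : 0 < β) (B : ℝ → ℝ) (hB0 : B 0 = 0) (hB1 : B 1 = 0)
    (A : Finset (Fin 0 → Bool)) : EhPow 0 A β ≥ B (muA 0 A) := by
  have hE : EhPow 0 A β = 0 := by
    rw [EhPow]
    have : ∀ x : Fin 0 → Bool, (hA 0 A x : ℝ) ^ β = 0 := by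
      intro x
      rw [hA_zero]
      exact_mod_cast Real.zero_rpow hβ0.ne'
    rw [Finset.sum_congr rfl fun x _ => this x]
    simp
  have hcard : A.card ≤ 1 := by
    have h1 := Finset.card_le_univ A
    have h2 : Fintype.card (Fin 0 → Bool) = 1 := by simp
    omega
  interval_cases h : A.card
  · have : muA 0 A = 0 := by rw [muA, h]; norm_num
    rw [hE, this, hB0]
  · have : muA 0 A = 1 := by rw [muA, h]; norm_num
    rw [hE, this, hB1]

set_option maxHeartbeats 1000000 in
lemma step_lemma {β : ℝ} (hβ0 : 0 < β) (hβ1 : β ≤ 1) (B : ℝ → ℝ)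
    (hBnonneg : ∀ t ∈ Set.Icc (0 : ℝ) 1, 0 ≤ B t)
    (htwo : ∀ x y : ℝ, 0 ≤ x → x ≤ y → y ≤ 1 →
      max (((y - x) ^ (1 / β) + (B y) ^ (1 / β)) ^ β)
          ((y - x) + ((2 : ℝ) ^ β - 1) * B y) + B x ≥ 2 * B ((x + y) / 2))
    (n : ℕ) (IH : ∀ A : Finset (Fin n → Bool), EhPow n A β ≥ B (muA n A))
    (A : Finset (Fin (n+1) → Bool)) (b : Bool)
    (hcard : (slc n A (!b)).card ≤ (slc n A b).card) :
    EhPow (n+1) A β ≥ B (muA (n+1) A) := by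
  classical
  set k : ℝ := ((2:ℝ) ^ n)⁻¹ with hk
  have hkpos : 0 < k := by rw [hk]; positivity
  set x : ℝ := muA n (slc n A (!b)) with hxdef
  set y : ℝ := muA n (slc n A b) with hydef
  -- basic facts about x, y
  have hcard_univ : ∀ s : Finset (Fin n → Bool), (s.card : ℝ) ≤ 2 ^ n := by
    intro s
    have h1 := Finset.card_le_univ s
    have h2 : (univ : Finset (Fin n → Bool)).card = 2 ^ n := by
      rw [Finset.card_univ, Fintype.card_fun]
      simp
    have : s.card ≤ 2 ^ n := h2 ▸ h1
    exact_mod_cast this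
  have hx0 : 0 ≤ x := by rw [hxdef, muA]; positivity
  have hy0 : 0 ≤ y := by rw [hydef, muA]; positivity
  have hxy : x ≤ y := by
    rw [hxdef, hydef, muA, muA]
    apply div_le_div_of_nonneg_right ?_ (by positivity)
    · exact_mod_cast hcard
  have hy1 : y ≤ 1 := by
    rw [hydef, muA]
    rw [div_le_one (by positivity)]
    exact hcard_univ _
  -- measure split
  have hmu : muA (n+1) A = (x + y) / 2 := by
    have hc : A.card = (slc n A (!b)).card + (slc n A b).card := by
      cases b
      · rw [cardSplit n A]; simp [add_comm]
      · rw [cardSplit n A]; simp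
    rw [muA, hc, hxdef, hydef, muA, muA]
    have h2n : ((2:ℝ)^n) ≠ 0 := by positivity
    push_cast
    rw [pow_succ]
    field_simp
  -- the sums over each half
  set Sig : Bool → ℝ := fun c => ∑ z : Fin n → Bool, (hA (n+1) A (Fin.cons c z) : ℝ) ^ β
    with hSig
  have hsplit : 2 * EhPow (n+1) A β = k * Sig (!b) + k * Sig b := by
    have h0 : 2 * EhPow (n+1) A β = k * Sig false + k * Sig true := by
      rw [EhPow, sumCons n (fun x => (hA (n+1) A x : ℝ) ^ β)]
      rw [hSig, hk]
      have : ((2:ℝ) ^ (n+1)) = 2 ^ n * 2 := by ring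
      rw [this]
      have h2n : ((2:ℝ) ^ n) ≠ 0 := by positivity
      field_simp
    rw [h0]
    cases b <;> simp only [Bool.not_false, Bool.not_true] <;> try ring
  -- the D function
  set D : (Fin n → Bool) → ℕ := fun z =>
    (if (Fin.cons b z : Fin (n+1) → Bool) ∈ A ∧
        (Fin.cons (!b) z : Fin (n+1) → Bool) ∉ A then 1 else 0) with hD
  have hSb : Sig b = ∑ z : Fin n → Bool, ((hA n (slc n A b) z + D z : ℕ) : ℝ) ^ β := by
    refine Finset.sum_congr rfl fun z _ => ?_
    rw [hA_cons n A b z]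
  -- abbreviations
  set H0 : ℝ := ∑ z : Fin n → Bool, (hA n (slc n A (!b)) z : ℝ) ^ β with hH0
  set H1 : ℝ := ∑ z : Fin n → Bool, (hA n (slc n A b) z : ℝ) ^ β with hH1
  have hH0nn : 0 ≤ H0 := Finset.sum_nonneg fun z _ => Real.rpow_nonneg (Nat.cast_nonneg _) β
  have hH1nn : 0 ≤ H1 := Finset.sum_nonneg fun z _ => Real.rpow_nonneg (Nat.cast_nonneg _) β
  have hE0 : EhPow n (slc n A (!b)) β = k * H0 := by rw [EhPow, hk, hH0]
  have hE1 : EhPow n (slc n A b) β = k * H1 := by rw [EhPow, hk, hH1]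
  set d : ℝ := ((slc n A b).card : ℝ) - ((slc n A (!b)).card : ℝ) with hd
  have hd0 : 0 ≤ d := by
    rw [hd]; rw [sub_nonneg]; exact_mod_cast hcard
  have hyx : y - x = k * d := by
    rw [hxdef, hydef, muA, muA, hd, hk]
    field_simp
  -- the small side
  have hsmall : H0 ≤ Sig (!b) := by
    rw [hH0, hSig]
    refine Finset.sum_le_sum fun z _ => ?_
    have h := hA_cons n A (!b) z
    have hle : hA n (slc n A (!b)) z ≤ hA (n+1) A (Fin.cons (!b) z) := by omega
    exact Real.rpow_le_rpow (Nat.cast_nonneg _) (by exact_mod_cast hle) hβ0.le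
  -- sum of D bound
  have hDsum : d ≤ ∑ z : Fin n → Bool, (D z : ℝ) := by
    have hpt : ∀ z : Fin n → Bool,
        (if z ∈ slc n A b then (1:ℝ) else 0) - (if z ∈ slc n A (!b) then (1:ℝ) else 0)
          ≤ (D z : ℝ) := by
      intro z
      by_cases h1 : (Fin.cons b z : Fin (n+1) → Bool) ∈ A <;>
        by_cases h2 : (Fin.cons (!b) z : Fin (n+1) → Bool) ∈ A <;>
        simp [hD, mem_slc, h1, h2]
    calc d = ∑ z : Fin n → Bool, ((if z ∈ slc n A b then (1:ℝ) else 0)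
          - (if z ∈ slc n A (!b) then (1:ℝ) else 0)) := by
          rw [Finset.sum_sub_distrib]
          rw [Finset.sum_boole, Finset.sum_boole]
          simp [hd]
      _ ≤ ∑ z : Fin n → Bool, (D z : ℝ) := Finset.sum_le_sum fun z _ => hpt z
  -- linear bound on big side
  have hlin : d + ((2:ℝ) ^ β - 1) * H1 ≤ Sig b := by
    rw [hSb, hH1]
    calc d + ((2:ℝ) ^ β - 1) * H1
        ≤ (∑ z : Fin n → Bool, (D z : ℝ))
          + ((2:ℝ) ^ β - 1) * ∑ z : Fin n → Bool, (hA n (slc n A b) z : ℝ) ^ β := by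
          rw [hH1]
          have h1 : (1:ℝ) ≤ 2 ^ β := one_le_two_rpow hβ0.le
          nlinarith [hDsum, hH1nn]
      _ = ∑ z : Fin n → Bool, ((D z : ℝ)
            + ((2:ℝ) ^ β - 1) * (hA n (slc n A b) z : ℝ) ^ β) := by
          rw [Finset.sum_add_distrib, Finset.mul_sum]
      _ ≤ ∑ z : Fin n → Bool, ((hA n (slc n A b) z + D z : ℕ) : ℝ) ^ β := by
          refine Finset.sum_le_sum fun z _ => ?_
          exact L1' hβ0 hβ1 _ _ (by rw [hD]; dsimp only; split <;> omega)
  -- rpow bound on big side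
  have hDpow : ∑ z : Fin n → Bool, (D z : ℝ) ^ β = ∑ z : Fin n → Bool, (D z : ℝ) := by
    refine Finset.sum_congr rfl fun z _ => ?_
    rw [hD]
    dsimp only
    split
    · simp [Real.one_rpow]
    · simp [Real.zero_rpow hβ0.ne']
  have hrpow : (d ^ (1/β) + H1 ^ (1/β)) ^ β ≤ Sig b := by
    have hL2 := L2 hβ0 hβ1 (fun z => hA n (slc n A b) z) D
    rw [hDpow] at hL2
    have hDnn : 0 ≤ ∑ z : Fin n → Bool, (D z : ℝ) :=
      Finset.sum_nonneg fun z _ => Nat.cast_nonneg _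
    have step1 : d ^ (1/β) ≤ (∑ z : Fin n → Bool, (D z : ℝ)) ^ (1/β) :=
      Real.rpow_le_rpow hd0 hDsum (by positivity)
    calc (d ^ (1/β) + H1 ^ (1/β)) ^ β
        ≤ (H1 ^ (1/β) + (∑ z : Fin n → Bool, (D z : ℝ)) ^ (1/β)) ^ β := by
          apply Real.rpow_le_rpow (by positivity) ?_ hβ0.le
          linarith
      _ ≤ ∑ z : Fin n → Bool, ((hA n (slc n A b) z + D z : ℕ) : ℝ) ^ β := hL2
      _ = Sig b := hSb.symm
  -- pull out k
  have hkfact : ∀ u v : ℝ, 0 ≤ u → 0 ≤ v →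
      ((k*u) ^ (1/β) + (k*v) ^ (1/β)) ^ β = k * ((u ^ (1/β) + v ^ (1/β)) ^ β) := by
    intro u v hu hv
    rw [Real.mul_rpow hkpos.le hu, Real.mul_rpow hkpos.le hv, ← mul_add]
    rw [Real.mul_rpow (Real.rpow_nonneg hkpos.le _) (by positivity)]
    congr 1
    rw [← Real.rpow_mul hkpos.le, one_div_mul_cancel hβ0.ne', Real.rpow_one]
  -- main chain
  have hE1IH : B y ≤ EhPow n (slc n A b) β := IH _
  have hE0IH : B x ≤ EhPow n (slc n A (!b)) β := IH _
  have hBy0 : 0 ≤ B y := hBnonneg y ⟨hy0, hy1⟩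
  have hBykH1 : B y ≤ k * H1 := by rw [← hE1]; exact hE1IH
  have hkH1 : 0 ≤ k * H1 := by positivity
  have hM2 : (y - x) + ((2:ℝ) ^ β - 1) * B y ≤ k * Sig b := by
    have h1 : (1:ℝ) ≤ 2 ^ β := one_le_two_rpow hβ0.le
    have h2 : (y - x) + ((2:ℝ)^β - 1) * B y ≤ (y - x) + ((2:ℝ)^β - 1) * (k * H1) := by
      nlinarith
    refine h2.trans ?_
    rw [hyx]
    calc k * d + ((2:ℝ)^β - 1) * (k * H1) = k * (d + ((2:ℝ)^β - 1) * H1) := by ring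
      _ ≤ k * Sig b := mul_le_mul_of_nonneg_left hlin hkpos.le
  have hM1 : ((y - x) ^ (1/β) + (B y) ^ (1/β)) ^ β ≤ k * Sig b := by
    have hstep1 : ((y - x) ^ (1/β) + (B y) ^ (1/β)) ^ β
        ≤ ((y - x) ^ (1/β) + (k * H1) ^ (1/β)) ^ β := by
      have ha : 0 ≤ (y - x) ^ (1/β) := Real.rpow_nonneg (by linarith) _
      have hb : 0 ≤ (B y) ^ (1/β) := Real.rpow_nonneg hBy0 _
      apply Real.rpow_le_rpow (by linarith) ?_ hβ0.le
      have := Real.rpow_le_rpow hBy0 hBykH1 (le_of_lt (by positivity : (0:ℝ) < 1/β))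
      linarith
    refine hstep1.trans ?_
    rw [hyx, hkfact d H1 hd0 hH1nn]
    exact mul_le_mul_of_nonneg_left hrpow hkpos.le
  have hmax : max (((y - x) ^ (1/β) + (B y) ^ (1/β)) ^ β)
      ((y - x) + ((2:ℝ) ^ β - 1) * B y) ≤ k * Sig b := max_le hM1 hM2
  have hsmall' : B x ≤ k * Sig (!b) := by
    calc B x ≤ EhPow n (slc n A (!b)) β := hE0IH
      _ = k * H0 := hE0
      _ ≤ k * Sig (!b) := mul_le_mul_of_nonneg_left hsmall hkpos.le
  have htwo' := htwo x y hx0 hxy hy1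
  rw [ge_iff_le]
  have hfin : 2 * B (muA (n+1) A) ≤ 2 * EhPow (n+1) A β := by
    rw [hmu]
    calc 2 * B ((x+y)/2)
        ≤ max (((y - x) ^ (1/β) + (B y) ^ (1/β)) ^ β)
            ((y - x) + ((2:ℝ) ^ β - 1) * B y) + B x := htwo'
      _ ≤ k * Sig b + k * Sig (!b) := add_le_add hmax hsmall'
      _ = 2 * EhPow (n+1) A β := by rw [hsplit]; ring
  linarith

/-- the inductive lemma. If `B : [0,1] → [0,∞)` satisfies `B(0) = B(1) = 0`,
`B(1/2) ≤ 1/2` and the two-point inequality, then `𝔼 h_A^β ≥ B(μ(A))`. -/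
theorem inductive_lemma (β : ℝ) (hβ : β ∈ Set.Icc (1 / 2 : ℝ) 1) (B : ℝ → ℝ)
    (hBnonneg : ∀ t ∈ Set.Icc (0 : ℝ) 1, 0 ≤ B t)
    (hB0 : B 0 = 0) (hB1 : B 1 = 0) (hBhalf : B (1 / 2) ≤ 1 / 2)
    (htwo : ∀ x y : ℝ, 0 ≤ x → x ≤ y → y ≤ 1 →
      max (((y - x) ^ (1 / β) + (B y) ^ (1 / β)) ^ β)
          ((y - x) + ((2 : ℝ) ^ β - 1) * B y) + B x ≥ 2 * B ((x + y) / 2)) :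
    ∀ n : ℕ, 1 ≤ n → ∀ A : Finset (Fin n → Bool), EhPow n A β ≥ B (muA n A) := by
  obtain ⟨hβh, hβ1⟩ := hβ
  have hβ0 : 0 < β := lt_of_lt_of_le (by norm_num) hβh
  have main : ∀ n : ℕ, ∀ A : Finset (Fin n → Bool), EhPow n A β ≥ B (muA n A) := by
    intro n
    induction n with
    | zero => exact base_case hβ0 B hB0 hB1
    | succ n IH =>
      intro A
      rcases le_total ((slc n A false).card) ((slc n A true).card) with h | h
      · exact step_lemma hβ0 hβ1 B hBnonneg htwo n IH A true (by simpa using h)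
      · exact step_lemma hβ0 hβ1 B hBnonneg htwo n IH A false (by simpa using h)
  intro n _ A
  exact main n A
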